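/- Let σ be a connection on B(H)⁺, where H is a nontrivial complex Hilbert space, and let f : [0,∞) → [0,∞) satisfy σ(I, xI) = f(x)·I for all x ≥ 0. Then ‖σ‖ = f(1), where ‖σ‖ = sup{‖σ(A,B)‖ : A, B positive with ‖A‖ = ‖B‖ = 1}. -/

import Mathlib

open scoped NNReal

/-- `A n ↓ L`: a decreasing sequence of operators converging to `L` in the
strong operator topology. -/
def DownTo {H : Type} [NormedAddCommGroup H] [InnerProductSpace ℂ H] [CompleteSpace H]
    (A : ℕ → H →L[ℂ] H) (L : H →L[ℂ] H) : Prop :=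
  (∀ n, A (n + 1) ≤ A n) ∧ ∀ x : H, Filter.Tendsto (fun n => A n x) Filter.atTop (nhds (L x))

/-- A Kubo-Ando connection on the positive cone of `B(H)` (with respect to the
Loewner order), given as a total binary operation preserving positivity and
satisfying monotonicity, the transformer inequality and continuity from above. -/
structure IsConnection {H : Type} [NormedAddCommGroup H] [InnerProductSpace ℂ H]
    [CompleteSpace H] (σ : (H →L[ℂ] H) → (H →L[ℂ] H) → (H →L[ℂ] H)) : Prop where
  isPositive : ∀ A B : H →L[ℂ] H, A.IsPositive → B.IsPositive → (σ A B).IsPositive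
  mono : ∀ A B C D : H →L[ℂ] H, A.IsPositive → B.IsPositive → C.IsPositive → D.IsPositive →
    A ≤ C → B ≤ D → σ A B ≤ σ C D
  transformer : ∀ A B C : H →L[ℂ] H, A.IsPositive → B.IsPositive → C.IsPositive →
    C * σ A B * C ≤ σ (C * A * C) (C * B * C)
  contAbove : ∀ (A B : ℕ → H →L[ℂ] H) (A₀ B₀ : H →L[ℂ] H),
    (∀ n, (A n).IsPositive) → (∀ n, (B n).IsPositive) → A₀.IsPositive → B₀.IsPositive →
    DownTo A A₀ → DownTo B B₀ → DownTo (fun n => σ (A n) (B n)) (σ A₀ B₀)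

/-- The norm of a connection:
`‖σ‖ = sup {‖A σ B‖ : A, B positive with ‖A‖ = ‖B‖ = 1}`. -/
noncomputable def connNorm {H : Type} [NormedAddCommGroup H] [InnerProductSpace ℂ H]
    [CompleteSpace H] (σ : (H →L[ℂ] H) → (H →L[ℂ] H) → (H →L[ℂ] H)) : ℝ :=
  sSup {r : ℝ | ∃ A B : H →L[ℂ] H, A.IsPositive ∧ B.IsPositive ∧
    ‖A‖ = 1 ∧ ‖B‖ = 1 ∧ r = ‖σ A B‖}

/-- A function `f : [0,∞) → [0,∞)` is operator monotone if for every complex Hilbert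
space `K` and all selfadjoint bounded operators `A ≤ B` on `K` with spectra contained in
`[0,∞)`, one has `f(A) ≤ f(B)` (computed via the continuous functional calculus). -/
def IsOperatorMonotoneNN (f : ℝ≥0 → ℝ≥0) : Prop :=
  ∀ (K : Type) [NormedAddCommGroup K] [InnerProductSpace ℂ K] [CompleteSpace K],
    ∀ A B : K →L[ℂ] K, IsSelfAdjoint A → IsSelfAdjoint B →
      spectrum ℝ A ⊆ Set.Ici (0 : ℝ) → spectrum ℝ B ⊆ Set.Ici (0 : ℝ) → A ≤ B →
      cfc (fun x : ℝ => (f x.toNNReal : ℝ)) A ≤ cfc (fun x : ℝ => (f x.toNNReal : ℝ)) B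

variable {H : Type} [NormedAddCommGroup H] [InnerProductSpace ℂ H] [CompleteSpace H]

open ContinuousLinearMap in
theorem ContinuousLinearMap.IsPositive.le_one_of_norm_le_one {A : H →L[ℂ] H}
    (hA : A.IsPositive) (hnA : ‖A‖ ≤ 1) : A ≤ 1 :=
  (CStarAlgebra.norm_le_one_iff_of_nonneg A ((nonneg_iff_isPositive A).2 hA)).mp hnA

namespace IsConnection

open ContinuousLinearMap

variable {σ : (H →L[ℂ] H) → (H →L[ℂ] H) → (H →L[ℂ] H)}

theorem norm_apply_le_norm_apply_one_one (hσ : IsConnection σ) {A B : H →L[ℂ] H}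
    (hA : A.IsPositive) (hB : B.IsPositive) (hnA : ‖A‖ ≤ 1) (hnB : ‖B‖ ≤ 1) :
    ‖σ A B‖ ≤ ‖σ 1 1‖ := by
  have hle : σ A B ≤ σ 1 1 := hσ.mono A B 1 1 hA hB isPositive_one isPositive_one
    (hA.le_one_of_norm_le_one hnA) (hB.le_one_of_norm_le_one hnB)
  exact CStarAlgebra.norm_le_norm_of_nonneg_of_le
    ((nonneg_iff_isPositive _).2 (hσ.isPositive A B hA hB)) hle

theorem connNorm_eq_norm_apply_one_one [Nontrivial H] (hσ : IsConnection σ) :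
    connNorm σ = ‖σ 1 1‖ := by
  refine IsGreatest.csSup_eq ⟨⟨1, 1, isPositive_one, isPositive_one, norm_one, norm_one, rfl⟩, ?_⟩
  rintro r ⟨A, B, hA, hB, hnA, hnB, rfl⟩
  exact hσ.norm_apply_le_norm_apply_one_one hA hB hnA.le hnB.le

end IsConnection

/-- if `f` is the representing function of `σ`, then `‖σ‖ = f(1)`. -/
theorem stmt_14 [Nontrivial H] (σ : (H →L[ℂ] H) → (H →L[ℂ] H) → (H →L[ℂ] H))
    (hσ : IsConnection σ) (f : ℝ≥0 → ℝ≥0)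
    (hf : ∀ x : ℝ≥0, σ 1 (((x : ℝ) : ℂ) • 1) = ((f x : ℝ) : ℂ) • 1) :
    connNorm σ = f 1 := by
  have h11 : σ 1 1 = ((f 1 : ℝ) : ℂ) • 1 := by simpa using hf 1
  rw [hσ.connNorm_eq_norm_apply_one_one, h11, norm_smul, norm_one, mul_one]
  simp
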